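/- Let ε, δ ∈ (0,1). Let (S, 𝒮) be a measurable space and, on a common probability space, let D₁ be an S-valued random element; for each positive integer n with (1−ε)^n ≤ δ let ξ₁ⁿ, …, ξ_nⁿ be i.i.d. ℝ^m-valued random vectors with common law μ, independent of D₁. Let t : S × ℝ^m → ℝ be jointly measurable such that for every s ∈ S the pushforward of μ under z ↦ t(s,z) is atomless. Define i*(n) = min{r ∈ {1,…,n} : Σ_{k=0}^{r−1} C(n,k)(1−ε)^k ε^{n−k} ≥ 1−δ}, let T_n be the i*(n)-th order statistic of t(D₁,ξ₁ⁿ),…,t(D₁,ξ_nⁿ), and let C_n = μ{z ∈ ℝ^m : t(D₁,z) ≤ T_n} be the realized coverage of the calibrated uncertainty set. Then C_n → 1−ε in probability as n → ∞. -/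

import Mathlib

/-!
Conditionally on `D₁ = s`, let `F_s` be the distribution function of `t(s, ξ)`, continuous
because that law is atomless. The coverage is `C_n = F_s(T_n)`. Since `F_s` is monotone,
`C_n ≥ 1 - ε + η` forces at least `n + 1 - i*(n)` sample points into
`{z : 1 - ε + η ≤ F_s(t(s, z))}`, a set of `μ`-mass at most `ε - η`, and symmetrically for
`C_n ≤ 1 - ε - η`. Once `|i*(n) - n(1 - ε)| ≤ nη/2`, Chebyshev's inequality for the binomial
count bounds both events by `O(1/n)`, uniformly in `s`. The same binomial Chebyshev bound,
applied to the inequality defining `i*(n)`, gives `i*(n)/n → 1 - ε`.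
-/

open MeasureTheory ProbabilityTheory Filter

/-- The `r`-th order statistic (1-based) of the finite tuple `v`: the `r`-th smallest value
among `v 0, …, v (n-1)` (junk value `0` if `r` is out of range). -/
noncomputable def orderStat {n : ℕ} (v : Fin n → ℝ) (r : ℕ) : ℝ :=
  if h : r - 1 < n then v (Tuple.sort v ⟨r - 1, h⟩) else 0

open Finset
open scoped Classical ENNReal

def binomialWeight (n : ℕ) (p : ℝ) (k : ℕ) : ℝ := n.choose k * p ^ k * (1 - p) ^ (n - k)

section Binomial

variable {p : ℝ} (n : ℕ)

lemma binomialWeight_nonneg (hp0 : 0 ≤ p) (hp1 : p ≤ 1) (k : ℕ) : 0 ≤ binomialWeight n p k := by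
  have : 0 ≤ 1 - p := by linarith
  unfold binomialWeight
  positivity

lemma eval_bernsteinPolynomial (k : ℕ) :
    (bernsteinPolynomial ℝ n k).eval p = binomialWeight n p k := by
  simp [bernsteinPolynomial, binomialWeight]

lemma sum_binomialWeight : ∑ k ∈ range (n + 1), binomialWeight n p k = 1 := by
  simpa [Polynomial.eval_finsetSum, eval_bernsteinPolynomial] using
    congrArg (Polynomial.eval p) (bernsteinPolynomial.sum ℝ n)

lemma sum_sq_mul_binomialWeight :
    ∑ k ∈ range (n + 1), ((k : ℝ) - n * p) ^ 2 * binomialWeight n p k = n * p * (1 - p) := by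
  have h := congrArg (Polynomial.eval p) (bernsteinPolynomial.variance ℝ n)
  simp only [Polynomial.eval_finsetSum, Polynomial.eval_mul, Polynomial.eval_pow,
    Polynomial.eval_sub, Polynomial.eval_natCast, Polynomial.eval_X, Polynomial.eval_one,
    nsmul_eq_mul, eval_bernsteinPolynomial] at h
  rw [← h]
  exact sum_congr rfl fun k _ => by ring

lemma sum_binomialWeight_filter_le (hp0 : 0 ≤ p) (hp1 : p ≤ 1) {a : ℝ} (ha : 0 < a) :
    ∑ k ∈ (range (n + 1)).filter (fun k : ℕ => a ≤ |(k : ℝ) - n * p|), binomialWeight n p k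
      ≤ n / (4 * a ^ 2) := by
  have hw := binomialWeight_nonneg n hp0 hp1
  calc _ ≤ ∑ k ∈ (range (n + 1)).filter (fun k : ℕ => a ≤ |(k : ℝ) - n * p|),
          ((k : ℝ) - n * p) ^ 2 / a ^ 2 * binomialWeight n p k := by
        refine sum_le_sum fun k hk => le_mul_of_one_le_left (hw k) ?_
        rw [one_le_div (by positivity), ← sq_abs ((k : ℝ) - n * p)]
        exact pow_le_pow_left₀ ha.le (mem_filter.mp hk).2 2
    _ ≤ ∑ k ∈ range (n + 1), ((k : ℝ) - n * p) ^ 2 / a ^ 2 * binomialWeight n p k :=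
        sum_le_sum_of_subset_of_nonneg (filter_subset _ _) fun k _ _ => by
          have := hw k; positivity
    _ = n * (p * (1 - p)) / a ^ 2 := by
        simp only [div_mul_eq_mul_div, ← sum_div, sum_sq_mul_binomialWeight, mul_assoc]
    _ ≤ n / (4 * a ^ 2) := by
        rw [div_le_div_iff₀ (by positivity) (by positivity)]
        have hp : p * (1 - p) * 4 ≤ 1 := by nlinarith [sq_nonneg (p - 1 / 2)]
        have : 0 ≤ (n : ℝ) * a ^ 2 := by positivity
        nlinarith

end Binomial

section Counting

lemma setOf_filter_mem_eq_pi {α : Type*} {A : Set α} {n : ℕ} (T : Finset (Fin n)) :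
    {x : Fin n → α | ({i | x i ∈ A} : Finset (Fin n)) = T}
      = Set.univ.pi fun i => if i ∈ T then A else Aᶜ := by
  ext x
  simp only [Finset.ext_iff, mem_filter, mem_univ, true_and, Set.mem_pi,
    Set.mem_univ, forall_const]
  refine forall_congr' fun i => ?_
  split_ifs with hi <;> simp [hi]

variable {α : Type*} [MeasurableSpace α] (μ : Measure α) [IsProbabilityMeasure μ] {A : Set α}
  (n : ℕ)

lemma measureReal_pi_setOf_card_filter_mem_eq (hA : MeasurableSet A) (k : ℕ) :
    (Measure.pi fun _ : Fin n => μ).real {x | #{i | x i ∈ A} = k}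
      = binomialWeight n (μ.real A) k := by
  have hunion : {x : Fin n → α | #{i | x i ∈ A} = k}
      = ⋃ T ∈ powersetCard k univ, {x : Fin n → α | ({i | x i ∈ A} : Finset (Fin n)) = T} := by
    ext x
    simp
  have hbox : ∀ T ∈ powersetCard k (univ : Finset (Fin n)),
      (Measure.pi fun _ : Fin n => μ).real {x | ({i | x i ∈ A} : Finset (Fin n)) = T}
        = μ.real A ^ k * (1 - μ.real A) ^ (n - k) := by
    intro T hT
    rw [setOf_filter_mem_eq_pi, measureReal_def, Measure.pi_pi, ENNReal.toReal_prod]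
    simp only [apply_ite, ← measureReal_def, probReal_compl_eq_one_sub hA]
    rw [prod_ite, prod_const, prod_const, filter_mem_eq_inter, univ_inter, filter_not,
      filter_mem_eq_inter, univ_inter, card_sdiff_of_subset (subset_univ T), card_univ,
      Fintype.card_fin, (mem_powersetCard.mp hT).2]
  rw [hunion, measureReal_biUnion_finset, sum_congr rfl hbox, sum_const, card_powersetCard,
    card_univ, Fintype.card_fin, nsmul_eq_mul, binomialWeight, mul_assoc]
  · intro T _ T' _ hne
    exact Set.disjoint_left.mpr fun x hx hx' => hne (hx.symm.trans hx')
  · intro T _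
    rw [setOf_filter_mem_eq_pi]
    exact .univ_pi fun i => by split_ifs <;> simp [hA, hA.compl]

lemma measureReal_pi_setOf_le_abs_card_filter_mem_sub_le (hA : MeasurableSet A) {a : ℝ}
    (ha : 0 < a) :
    (Measure.pi fun _ : Fin n => μ).real {x | a ≤ |(#{i | x i ∈ A} : ℝ) - n * μ.real A|}
      ≤ n / (4 * a ^ 2) := by
  have hunion : {x : Fin n → α | a ≤ |(#{i | x i ∈ A} : ℝ) - n * μ.real A|}
      = ⋃ k ∈ (range (n + 1)).filter (fun k : ℕ => a ≤ |(k : ℝ) - n * μ.real A|),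
          {x : Fin n → α | #{i | x i ∈ A} = k} := by
    ext x
    simp only [Set.mem_iUnion, mem_filter, mem_range, exists_prop]
    refine ⟨fun h => ⟨_, ⟨Nat.lt_succ_of_le ?_, h⟩, rfl⟩, ?_⟩
    · exact (card_filter_le _ _).trans_eq (by simp)
    · rintro ⟨k, ⟨-, hk⟩, rfl⟩
      exact hk
  rw [hunion]
  refine (measureReal_biUnion_finset_le _ _).trans ?_
  simp only [measureReal_pi_setOf_card_filter_mem_eq μ n hA]
  exact sum_binomialWeight_filter_le n measureReal_nonneg measureReal_le_one ha

end Counting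

section OrderStat

variable {n r : ℕ} (v : Fin n → ℝ) {G : ℝ → ℝ} {c : ℝ}

lemma Monotone.sub_le_card_filter_of_le_orderStat (hG : Monotone G) (hr : 1 ≤ r) (hrn : r ≤ n)
    (hc : c ≤ G (orderStat v r)) : n + 1 - r ≤ #{i | c ≤ G (v i)} := by
  have h : r - 1 < n := by omega
  have hmaps : ∀ j ∈ Ici (⟨r - 1, h⟩ : Fin n),
      Tuple.sort v j ∈ ({i | c ≤ G (v i)} : Finset (Fin n)) := fun j hj => by
    simp only [orderStat, h, dif_pos] at hc
    simpa using hc.trans (hG (Tuple.monotone_sort v (mem_Ici.mp hj)))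
  have := card_le_card_of_injOn _ hmaps (Tuple.sort v).injective.injOn
  rw [Fin.card_Ici, Fin.val_mk] at this
  omega

lemma Monotone.le_card_filter_of_orderStat_le (hG : Monotone G) (hr : 1 ≤ r) (hrn : r ≤ n)
    (hc : G (orderStat v r) ≤ c) : r ≤ #{i | G (v i) ≤ c} := by
  have h : r - 1 < n := by omega
  have hmaps : ∀ j ∈ Iic (⟨r - 1, h⟩ : Fin n),
      Tuple.sort v j ∈ ({i | G (v i) ≤ c} : Finset (Fin n)) := fun j hj => by
    simp only [orderStat, h, dif_pos] at hc
    simpa using (hG (Tuple.monotone_sort v (mem_Iic.mp hj))).trans hc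
  have := card_le_card_of_injOn _ hmaps (Tuple.sort v).injective.injOn
  rw [Fin.card_Iic, Fin.val_mk] at this
  omega

lemma Monotone.sub_le_card_filter_or_le_card_filter (hG : Monotone G) (hr : 1 ≤ r) (hrn : r ≤ n)
    {p η : ℝ} (h : η ≤ |G (orderStat v r) - p|) :
    n + 1 - r ≤ #{i | p + η ≤ G (v i)} ∨ r ≤ #{i | G (v i) ≤ p - η} := by
  rcases le_abs'.mp h with hlow | hup
  · exact Or.inr (hG.le_card_filter_of_orderStat_le v hr hrn (by linarith))
  · exact Or.inl (hG.sub_le_card_filter_of_le_orderStat v hr hrn (by linarith))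

end OrderStat

section Cdf

variable (ν : Measure ℝ) [IsProbabilityMeasure ν] [NullSingletonClass ν] {c : ℝ}

lemma continuous_cdf : Continuous (cdf ν) := by
  refine continuous_iff_continuousAt.2 fun x => ?_
  have hleft : Function.leftLim (cdf ν) x = cdf ν x := by
    have h := (cdf ν).measure_singleton x
    rw [measure_cdf, measure_singleton, eq_comm, ENNReal.ofReal_eq_zero, sub_nonpos] at h
    exact le_antisymm ((monotone_cdf ν).leftLim_le le_rfl) h
  rw [(monotone_cdf ν).continuousAt_iff_leftLim_eq_rightLim, hleft, (cdf ν).rightLim_eq]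

lemma measureReal_cdf_le_le (hc0 : 0 < c) (hc1 : c < 1) : ν.real {x | cdf ν x ≤ c} ≤ c := by
  set S := {x | cdf ν x ≤ c}
  have hclosed : IsClosed S := isClosed_le (continuous_cdf ν) continuous_const
  obtain ⟨x₀, hx₀⟩ := ((tendsto_cdf_atBot ν).eventually_lt_const hc0).exists
  obtain ⟨x₁, hx₁⟩ := ((tendsto_cdf_atTop ν).eventually_const_lt hc1).exists
  have hbdd : BddAbove S := ⟨x₁, fun y hy => ((monotone_cdf ν).reflect_lt (hy.trans_lt hx₁)).le⟩
  have hmem : sSup S ∈ S := hclosed.csSup_mem ⟨x₀, hx₀.le⟩ hbdd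
  calc ν.real S ≤ ν.real (Set.Iic (sSup S)) := measureReal_mono fun y hy => le_csSup hbdd hy
    _ = cdf ν (sSup S) := (cdf_eq_real ν _).symm
    _ ≤ c := hmem

lemma measureReal_le_cdf_le (hc0 : 0 < c) (hc1 : c < 1) : ν.real {x | c ≤ cdf ν x} ≤ 1 - c := by
  set S := {x | c ≤ cdf ν x}
  have hclosed : IsClosed S := isClosed_le continuous_const (continuous_cdf ν)
  obtain ⟨x₀, hx₀⟩ := ((tendsto_cdf_atBot ν).eventually_lt_const hc0).exists
  obtain ⟨x₁, hx₁⟩ := ((tendsto_cdf_atTop ν).eventually_const_lt hc1).exists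
  have hbdd : BddBelow S := ⟨x₀, fun y hy => ((monotone_cdf ν).reflect_lt (hx₀.trans_le hy)).le⟩
  have hmem : sInf S ∈ S := hclosed.csInf_mem ⟨x₁, hx₁.le⟩ hbdd
  calc ν.real S ≤ ν.real (Set.Iio (sInf S))ᶜ := by
        rw [Set.compl_Iio]
        exact measureReal_mono fun y hy => csInf_le hbdd hy
    _ = 1 - cdf ν (sInf S) := by
        rw [probReal_compl_eq_one_sub measurableSet_Iio, measureReal_congr Iio_ae_eq_Iic,
          cdf_eq_real]
    _ ≤ 1 - c := by linarith [show c ≤ cdf ν (sInf S) from hmem]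

variable {α : Type*} [MeasurableSpace α] {μ : Measure α} [IsProbabilityMeasure μ] {f : α → ℝ}

lemma measureReal_cdf_map_le_le (hf : Measurable f) [NullSingletonClass (μ.map f)]
    (hc0 : 0 < c) (hc1 : c < 1) : μ.real {z | cdf (μ.map f) (f z) ≤ c} ≤ c := by
  have := Measure.isProbabilityMeasure_map (μ := μ) hf.aemeasurable
  have h := measureReal_cdf_le_le (μ.map f) hc0 hc1
  rwa [map_measureReal_apply hf (measurableSet_le (continuous_cdf _).measurable
    measurable_const)] at h

lemma measureReal_le_cdf_map_le (hf : Measurable f) [NullSingletonClass (μ.map f)]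
    (hc0 : 0 < c) (hc1 : c < 1) : μ.real {z | c ≤ cdf (μ.map f) (f z)} ≤ 1 - c := by
  have := Measure.isProbabilityMeasure_map (μ := μ) hf.aemeasurable
  have h := measureReal_le_cdf_le (μ.map f) hc0 hc1
  rwa [map_measureReal_apply hf (measurableSet_le measurable_const
    (continuous_cdf _).measurable)] at h

end Cdf

section RandomSet

variable {S α : Type*} [MeasurableSpace S] [MeasurableSpace α] {B : Set (S × α)} {n : ℕ}

lemma measurableSet_setOf_le_card_filter_mem (hB : MeasurableSet B) (k : ℕ) :
    MeasurableSet {sx : S × (Fin n → α) | k ≤ #{i | (sx.1, sx.2 i) ∈ B}} := by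
  have hcard : Measurable fun sx : S × (Fin n → α) => #{i | (sx.1, sx.2 i) ∈ B} := by
    simp only [card_filter]
    exact Finset.measurable_sum _ fun i _ =>
      Measurable.ite (hB.preimage (by fun_prop)) measurable_const measurable_const
  exact hcard measurableSet_Ici

lemma prod_pi_setOf_le_card_filter_mem_le (ρ : Measure S) [IsProbabilityMeasure ρ]
    (μ : Measure α) [IsProbabilityMeasure μ] (hB : MeasurableSet B) {k : ℕ} {a : ℝ} (ha : 0 < a)
    (hk : ∀ s, n * μ.real (Prod.mk s ⁻¹' B) + a ≤ k) :
    ρ.prod (Measure.pi fun _ : Fin n => μ) {sx | k ≤ #{i | (sx.1, sx.2 i) ∈ B}}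
      ≤ ENNReal.ofReal (n / (4 * a ^ 2)) := by
  rw [Measure.prod_apply (measurableSet_setOf_le_card_filter_mem hB k)]
  refine (lintegral_mono (g := fun _ => ENNReal.ofReal (n / (4 * a ^ 2))) fun s => ?_).trans
    (by simp)
  have hslice : MeasurableSet (Prod.mk s ⁻¹' B) := measurable_prodMk_left hB
  rw [← ofReal_measureReal]
  refine ENNReal.ofReal_le_ofReal <| (measureReal_mono fun x hx => ?_).trans
    (measureReal_pi_setOf_le_abs_card_filter_mem_sub_le μ n hslice ha)
  have hx : (k : ℝ) ≤ #{i | x i ∈ Prod.mk s ⁻¹' B} := by exact_mod_cast hx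
  show a ≤ |(#{i | x i ∈ Prod.mk s ⁻¹' B} : ℝ) - n * μ.real (Prod.mk s ⁻¹' B)|
  rw [abs_of_nonneg (by linarith [hk s])]
  linarith [hk s]

end RandomSet

lemma map_prodMk_eq_prod_pi {Ω S α : Type*} [MeasurableSpace Ω] [MeasurableSpace S]
    [MeasurableSpace α] (P : Measure Ω) [IsProbabilityMeasure P] {μ : Measure α} {D : Ω → S}
    (hD : Measurable D) {n : ℕ} {ξ : Fin n → Ω → α} (hξ : ∀ i, Measurable (ξ i))
    (hiid : iIndepFun ξ P) (hlaw : ∀ i, P.map (ξ i) = μ)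
    (hindep : IndepFun D (fun ω i => ξ i ω) P) :
    P.map (fun ω => (D ω, fun i => ξ i ω)) = (P.map D).prod (Measure.pi fun _ : Fin n => μ) := by
  rw [(indepFun_iff_map_prod_eq_prod_map_map hD.aemeasurable
    (measurable_pi_lambda _ hξ).aemeasurable).mp hindep,
    hiid.map_fun_eq_pi_map fun i => (hξ i).aemeasurable]
  simp only [hlaw]

section Coverage

variable {Ω S α : Type*} [MeasurableSpace Ω] [MeasurableSpace S] [MeasurableSpace α]
  {μ : Measure α} [IsProbabilityMeasure μ]

lemma cdf_map_eq {f : α → ℝ} (hf : Measurable f) (y : ℝ) :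
    cdf (μ.map f) y = (μ {z | f z ≤ y}).toReal := by
  have := Measure.isProbabilityMeasure_map (μ := μ) hf.aemeasurable
  rw [cdf_eq_real, map_measureReal_apply hf measurableSet_Iic]
  rfl

lemma measurable_cdf_map_apply {t : S × α → ℝ} (ht : Measurable t) :
    Measurable fun q : S × α => cdf (μ.map fun z => t (q.1, z)) (t q) := by
  have h : (fun q : S × α => cdf (μ.map fun z => t (q.1, z)) (t q))
      = fun q => (μ (Prod.mk q ⁻¹' {x : (S × α) × α | t (x.1.1, x.2) ≤ t x.1})).toReal :=
    funext fun q => cdf_map_eq (ht.comp measurable_prodMk_left) _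
  rw [h]
  exact (measurable_measure_prodMk_left
    (measurableSet_le (ht.comp (by fun_prop)) (ht.comp measurable_fst))).ennreal_toReal

theorem measure_le_abs_coverage_sub_le (P : Measure Ω) [IsProbabilityMeasure P] {D : Ω → S}
    (hD : Measurable D) {n : ℕ} {ξ : Fin n → Ω → α} (hξ : ∀ i, Measurable (ξ i))
    (hiid : iIndepFun ξ P) (hlaw : ∀ i, P.map (ξ i) = μ)
    (hindep : IndepFun D (fun ω i => ξ i ω) P) {t : S × α → ℝ} (ht : Measurable t)
    (hatom : ∀ s x, (μ.map fun z => t (s, z)) {x} = 0) {p η : ℝ} (hη : 0 < η) (hηp : η < p)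
    (hpη : p + η < 1) {r : ℕ} (hr1 : 1 ≤ r) (hrn : r ≤ n) (hr : |(r : ℝ) - n * p| ≤ η / 2 * n) :
    P {ω | η ≤ |(μ {z | t (D ω, z) ≤ orderStat (fun i => t (D ω, ξ i ω)) r}).toReal - p|}
      ≤ 2 * ENNReal.ofReal (n / (4 * (η / 2 * n) ^ 2)) := by
  have hts : ∀ s, Measurable fun z => t (s, z) := fun s => ht.comp measurable_prodMk_left
  have hatom' : ∀ s, NullSingletonClass (μ.map fun z => t (s, z)) := fun s => ⟨hatom s⟩
  set F : S × α → ℝ := fun q => cdf (μ.map fun z => t (q.1, z)) (t q)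
  have hF : Measurable F := measurable_cdf_map_apply ht
  set Eup := {sx : S × (Fin n → α) | n + 1 - r ≤ #{i | (sx.1, sx.2 i) ∈ {q | p + η ≤ F q}}}
  set Elow := {sx : S × (Fin n → α) | r ≤ #{i | (sx.1, sx.2 i) ∈ {q | F q ≤ p - η}}}
  have hsub : {ω | η ≤ |(μ {z | t (D ω, z) ≤ orderStat (fun i => t (D ω, ξ i ω)) r}).toReal - p|}
      ⊆ (fun ω => (D ω, fun i => ξ i ω)) ⁻¹' (Eup ∪ Elow) := by
    intro ω hω
    rw [Set.mem_ofPred_eq, ← cdf_map_eq (hts (D ω))] at hω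
    exact (monotone_cdf (μ.map fun z => t (D ω, z))).sub_le_card_filter_or_le_card_filter
      (fun i => t (D ω, ξ i ω)) hr1 hrn hω
  obtain ⟨hrlow, hrupp⟩ := abs_le.mp hr
  have hn : (0 : ℝ) < n := by exact_mod_cast hr1.trans hrn
  have hup : ∀ s, n * μ.real (Prod.mk s ⁻¹' {q | p + η ≤ F q}) + η / 2 * n
      ≤ ((n + 1 - r : ℕ) : ℝ) := fun s => by
    have h := measureReal_le_cdf_map_le (μ := μ) (hts s) (c := p + η) (by linarith) hpη
    change μ.real (Prod.mk s ⁻¹' {q | p + η ≤ F q}) ≤ _ at h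
    rw [Nat.cast_sub (by omega), Nat.cast_add, Nat.cast_one]
    nlinarith [mul_le_mul_of_nonneg_left h hn.le]
  have hlow : ∀ s, n * μ.real (Prod.mk s ⁻¹' {q | F q ≤ p - η}) + η / 2 * n ≤ (r : ℝ) :=
    fun s => by
      have h := measureReal_cdf_map_le_le (μ := μ) (hts s) (c := p - η) (by linarith)
        (by linarith)
      change μ.real (Prod.mk s ⁻¹' {q | F q ≤ p - η}) ≤ _ at h
      nlinarith [mul_le_mul_of_nonneg_left h hn.le]
  have := Measure.isProbabilityMeasure_map (μ := P) hD.aemeasurable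
  calc P {ω | η ≤ |(μ {z | t (D ω, z) ≤ orderStat (fun i => t (D ω, ξ i ω)) r}).toReal - p|}
      ≤ (P.map D).prod (Measure.pi fun _ : Fin n => μ) (Eup ∪ Elow) := by
        rw [← map_prodMk_eq_prod_pi P hD hξ hiid hlaw hindep, Measure.map_apply
          (hD.prodMk (measurable_pi_lambda _ hξ))
          ((measurableSet_setOf_le_card_filter_mem (measurableSet_le measurable_const hF) _).union
            (measurableSet_setOf_le_card_filter_mem (measurableSet_le hF measurable_const) _))]
        exact measure_mono hsub
    _ ≤ 2 * ENNReal.ofReal (n / (4 * (η / 2 * n) ^ 2)) := by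
        refine (measure_union_le _ _).trans ?_
        rw [two_mul]
        exact add_le_add
          (prod_pi_setOf_le_card_filter_mem_le _ μ (measurableSet_le measurable_const hF)
            (by positivity) hup)
          (prod_pi_setOf_le_card_filter_mem_le _ μ (measurableSet_le hF measurable_const)
            (by positivity) hlow)

end Coverage

lemma tendsto_natCast_div_sq_mul_atTop {c : ℝ} (hc : c ≠ 0) :
    Tendsto (fun n : ℕ => (n : ℝ) / (4 * (c * n) ^ 2)) atTop (nhds 0) := by
  have h : (fun n : ℕ => (n : ℝ) / (4 * (c * n) ^ 2)) = fun n : ℕ => (4 * c ^ 2)⁻¹ * (n : ℝ)⁻¹ := by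
    funext n
    rcases eq_or_ne (n : ℝ) 0 with hn | hn
    · simp [hn]
    · field_simp
  rw [h, ← mul_zero (4 * c ^ 2)⁻¹]
  exact (tendsto_inv_atTop_nhds_zero_nat (𝕜 := ℝ)).const_mul _

section Quantile

variable {n r : ℕ} {p δ θ : ℝ}

lemma abs_sub_le_of_isLeast_sum_binomialWeight (hp0 : 0 ≤ p) (hp1 : p ≤ 1) (hθ : 0 < θ)
    (hr : IsLeast {k | 1 ≤ k ∧ k ≤ n ∧ 1 - δ ≤ ∑ j ∈ range k, binomialWeight n p j} r)
    (hlow : n / (4 * (θ * n) ^ 2) < 1 - δ) (hupp : n / (4 * (θ / 2 * n) ^ 2) ≤ δ)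
    (hθn : 2 ≤ θ * n) :
    |(r : ℝ) - n * p| ≤ θ * n := by
  obtain ⟨⟨hr1, hrn, hsum⟩, hmin⟩ := hr
  have hn : (0 : ℝ) < n := pos_of_mul_pos_right (by linarith : 0 < θ * n) hθ.le
  have hw := binomialWeight_nonneg n hp0 hp1
  rw [abs_le]
  constructor
  · by_contra! hlt
    have htail : ∑ j ∈ range r, binomialWeight n p j ≤ n / (4 * (θ * n) ^ 2) := by
      refine (sum_le_sum_of_subset_of_nonneg (fun k hk => ?_) fun k _ _ => hw k).trans
        (sum_binomialWeight_filter_le n hp0 hp1 (by positivity))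
      have hkr := mem_range.mp hk
      have hk : (k : ℝ) + 1 ≤ r := by exact_mod_cast hkr
      refine mem_filter.mpr ⟨mem_range.mpr (by omega), ?_⟩
      rw [abs_sub_comm, abs_of_nonneg (by linarith)]
      linarith
    linarith
  · -- otherwise `r - 1` would already satisfy the defining inequality
    by_contra! hgt
    have hr2 : 2 ≤ r := by exact_mod_cast (by nlinarith : (2 : ℝ) ≤ r)
    refine absurd (hmin ⟨by omega, by omega, ?_⟩) (by omega : ¬ r ≤ r - 1)
    have htail : ∑ j ∈ Ico (r - 1) (n + 1), binomialWeight n p j ≤ δ := by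
      refine ((sum_le_sum_of_subset_of_nonneg (fun k hk => ?_) fun k _ _ => hw k).trans
        (sum_binomialWeight_filter_le n hp0 hp1 (by positivity))).trans hupp
      obtain ⟨hk1, hk2⟩ := mem_Ico.mp hk
      have hk : (r : ℝ) ≤ k + 1 := by exact_mod_cast (by omega : r ≤ k + 1)
      refine mem_filter.mpr ⟨mem_range.mpr hk2, ?_⟩
      rw [abs_of_nonneg (by linarith)]
      linarith
    have htotal := sum_range_add_sum_Ico (fun j => binomialWeight n p j) (by omega : r - 1 ≤ n + 1)
    rw [sum_binomialWeight] at htotal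
    linarith

lemma eventually_abs_sub_le_of_isLeast_sum_binomialWeight (hp0 : 0 ≤ p) (hp1 : p ≤ 1)
    (hδ : δ ∈ Set.Ioo 0 1) (hθ : 0 < θ) {r : ℕ → ℕ}
    (hr : ∀ᶠ n in atTop,
      IsLeast {k | 1 ≤ k ∧ k ≤ n ∧ 1 - δ ≤ ∑ j ∈ range k, binomialWeight n p j} (r n)) :
    ∀ᶠ n : ℕ in atTop, |(r n : ℝ) - n * p| ≤ θ * n := by
  have hlow := (tendsto_natCast_div_sq_mul_atTop hθ.ne').eventually_lt_const
    (by linarith [hδ.2] : (0 : ℝ) < 1 - δ)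
  have hupp := (tendsto_natCast_div_sq_mul_atTop (half_pos hθ).ne').eventually_le_const hδ.1
  have hθn : ∀ᶠ n : ℕ in atTop, 2 ≤ θ * n :=
    (tendsto_natCast_atTop_atTop.const_mul_atTop hθ).eventually_ge_atTop 2
  filter_upwards [hr, hlow, hupp, hθn] with n hrn hlown huppn hθnn
  exact abs_sub_le_of_isLeast_sum_binomialWeight hp0 hp1 hθ hrn hlown huppn hθnn

end Quantile

/-- asymptotic tightness of the tolerance level: the realized coverage
`C_n = μ{z : t(D₁,z) ≤ T_n}` of the calibrated uncertainty set converges to `1-ε` in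
probability as the Phase 2 sample size `n → ∞`. -/
theorem coverage_tendsto_in_probability
    {Ω S : Type*} [MeasurableSpace Ω] [MeasurableSpace S]
    (P : Measure Ω) [IsProbabilityMeasure P]
    (m : ℕ)
    (ε δ : ℝ) (hε : ε ∈ Set.Ioo (0 : ℝ) 1) (hδ : δ ∈ Set.Ioo (0 : ℝ) 1)
    (D₁ : Ω → S) (hD₁ : Measurable D₁)
    (ξ : (n : ℕ) → Fin n → Ω → (Fin m → ℝ))
    (hξmeas : ∀ n, ∀ i : Fin n, Measurable (ξ n i))
    (μ : Measure (Fin m → ℝ)) [IsProbabilityMeasure μ]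
    (hiid : ∀ n : ℕ, (1 - ε) ^ n ≤ δ → iIndepFun (ξ n) P)
    (hlaw : ∀ n : ℕ, (1 - ε) ^ n ≤ δ → ∀ i : Fin n, Measure.map (ξ n i) P = μ)
    (hindep : ∀ n : ℕ, (1 - ε) ^ n ≤ δ → IndepFun D₁ (fun ω => fun i : Fin n => ξ n i ω) P)
    (t : S × (Fin m → ℝ) → ℝ) (ht : Measurable t)
    (hatomless : ∀ s : S, ∀ x : ℝ, Measure.map (fun z => t (s, z)) μ {x} = 0)
    (istar : ℕ → ℕ)
    (histar : ∀ n : ℕ, (1 - ε) ^ n ≤ δ →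
      IsLeast {r : ℕ | 1 ≤ r ∧ r ≤ n ∧
        1 - δ ≤ ∑ k ∈ Finset.range r, (n.choose k : ℝ) * (1 - ε) ^ k * ε ^ (n - k)}
        (istar n)) :
    ∀ η : ℝ, 0 < η →
      Tendsto
        (fun n : ℕ => P {ω | η ≤
          |(μ {z | t (D₁ ω, z) ≤ orderStat (fun i => t (D₁ ω, ξ n i ω)) (istar n)}).toReal
            - (1 - ε)|})
        atTop (nhds 0) := by
  intro η hη
  obtain ⟨hε0, hε1⟩ := hε
  -- shrinking `η` keeps both levels `1 - ε ± η'` inside `(0, 1)`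
  obtain ⟨η', hη'0, hη'η, hη'p, hη'ε⟩ : ∃ η', 0 < η' ∧ η' ≤ η ∧ η' < 1 - ε ∧ η' < ε :=
    ⟨min η (min ε (1 - ε) / 2), lt_min hη (half_pos (lt_min hε0 (by linarith))), min_le_left _ _,
      by linarith [min_le_right η (min ε (1 - ε) / 2), min_le_right ε (1 - ε)],
      by linarith [min_le_right η (min ε (1 - ε) / 2), min_le_left ε (1 - ε)]⟩
  have hlarge : ∀ᶠ n in atTop, (1 - ε) ^ n ≤ δ :=
    (tendsto_pow_atTop_nhds_zero_of_lt_one (by linarith) (by linarith)).eventually_le_const hδ.1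
  have hdev : ∀ᶠ n : ℕ in atTop, |(istar n : ℝ) - n * (1 - ε)| ≤ η' / 2 * n :=
    eventually_abs_sub_le_of_isLeast_sum_binomialWeight (by linarith) (by linarith) hδ
      (half_pos hη'0) (hlarge.mono fun n hn => by simpa [binomialWeight] using histar n hn)
  have hlim := ENNReal.Tendsto.const_mul (ENNReal.tendsto_ofReal
    (tendsto_natCast_div_sq_mul_atTop (half_pos hη'0).ne')) (Or.inr (ENNReal.ofNat_ne_top (n := 2)))
  rw [ENNReal.ofReal_zero, mul_zero] at hlim
  refine tendsto_of_tendsto_of_tendsto_of_le_of_le' tendsto_const_nhds hlim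
    (.of_forall fun _ => zero_le) ?_
  filter_upwards [hlarge, hdev] with n hn hdevn
  obtain ⟨⟨hr1, hrn, -⟩, -⟩ := histar n hn
  calc _ ≤ P {ω | η' ≤
          |(μ {z | t (D₁ ω, z) ≤ orderStat (fun i => t (D₁ ω, ξ n i ω)) (istar n)}).toReal
            - (1 - ε)|} := measure_mono fun ω hω => hη'η.trans hω
    _ ≤ _ := measure_le_abs_coverage_sub_le P hD₁ (hξmeas n) (hiid n hn) (hlaw n hn)
        (hindep n hn) ht hatomless hη'0 hη'p (by linarith) hr1 hrn hdevn
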